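/- The total variation of the minmod-limited piecewise linear reconstruction does not exceed the total variation of the cell averages: for a finite sequence U_1,…,U_N with slopes σ_i = minmod((U_i − U_{i−1})/Δx, (U_{i+1} − U_i)/Δx) (with σ_1 = σ_N = 0), the reconstructed piecewise linear function Ũ(x) = U_i + σ_i(x − x_i) on cell i satisfies TV(Ũ) ≤ ∑_{i=1}^{N−1} |U_{i+1} − U_i|. -/

import Mathlib

/-!
Multiplying the minmod slope by `Δx` turns it into `minmod` of the two neighbouring
differences, so both half-slope contributions `σ_i Δx / 2` and `σ_{i+1} Δx / 2` at the
interface `i + ½` lie between `0` and `D = U_{i+1} - U_i`. Splitting each in-cell variation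
`|σ_i| Δx` evenly between the two interfaces of the cell (the boundary slopes vanish), the
interface receives `|s| / 2 + |t| / 2 + |D - s / 2 - t / 2|` with `s, t` between `0` and `D`,
which is exactly `|D|`.
-/

/-- The minmod limiter. -/
noncomputable def minmod (a₁ a₂ : ℝ) : ℝ :=
  if Real.sign a₁ = Real.sign a₂ then Real.sign a₁ * min |a₁| |a₂| else 0

open Finset Set

section LinearOrderedField

variable {α : Type*} [Field α] [LinearOrder α] [IsStrictOrderedRing α]

theorem Set.mul_const_mem_uIcc {x a b : α} (h : x ∈ uIcc a b) (c : α) :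
    x * c ∈ uIcc (a * c) (b * c) :=
  image_mul_const_uIcc c a b ▸ mem_image_of_mem (· * c) h

theorem abs_half_add_abs_half_add_abs_sub_eq {D s t : α} (hs : s ∈ uIcc 0 D)
    (ht : t ∈ uIcc 0 D) : |s| / 2 + |t| / 2 + |D - s / 2 - t / 2| = |D| := by
  rcases le_total 0 D with hD | hD
  · rw [uIcc_of_le hD] at hs ht
    rw [abs_of_nonneg hD, abs_of_nonneg hs.1, abs_of_nonneg ht.1,
      abs_of_nonneg (by linarith [hs.2, ht.2])]
    ring
  · rw [uIcc_of_ge hD] at hs ht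
    rw [abs_of_nonpos hD, abs_of_nonpos hs.2, abs_of_nonpos ht.2,
      abs_of_nonpos (by linarith [hs.1, ht.1])]
    ring

end LinearOrderedField

theorem Finset.sum_range_eq_sum_range_pred_halves {K : Type*} [DivisionRing K]
    [NeZero (2 : K)] (f : ℕ → K) (N : ℕ) (h₀ : f 0 = 0) (hN : f (N - 1) = 0) :
    ∑ i ∈ range N, f i = ∑ i ∈ range (N - 1), (f i / 2 + f (i + 1) / 2) := by
  cases N with
  | zero => simp
  | succ m =>
    rw [Nat.add_sub_cancel] at hN ⊢
    have hlast : ∑ i ∈ range (m + 1), f i = ∑ i ∈ range m, f i := by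
      rw [sum_range_succ, hN, add_zero]
    have hfirst : ∑ i ∈ range (m + 1), f i = ∑ i ∈ range m, f (i + 1) := by
      rw [sum_range_succ', h₀, add_zero]
    rw [sum_add_distrib, ← sum_div, ← sum_div, ← hlast, ← hfirst, add_halves]

theorem Real.sign_mul_mem_uIcc_zero {a m : ℝ} (hm₀ : 0 ≤ m) (hm : m ≤ |a|) :
    Real.sign a * m ∈ uIcc 0 a := by
  rcases lt_trichotomy a 0 with ha | rfl | ha
  · rw [Real.sign_of_neg ha, uIcc_of_ge ha.le]
    rw [abs_of_neg ha] at hm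
    constructor <;> linarith
  · simp
  · rw [Real.sign_of_pos ha, uIcc_of_le ha.le, one_mul, ← abs_of_pos ha]
    exact ⟨hm₀, hm⟩

theorem minmod_comm (a b : ℝ) : minmod a b = minmod b a := by
  unfold minmod
  split_ifs with h h' h'
  · rw [h, min_comm]
  · exact absurd h.symm h'
  · exact absurd h'.symm h
  · rfl

theorem minmod_mem_uIcc_left (a b : ℝ) : minmod a b ∈ uIcc 0 a := by
  unfold minmod
  split_ifs
  · exact Real.sign_mul_mem_uIcc_zero (le_min (abs_nonneg a) (abs_nonneg b)) (min_le_left _ _)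
  · exact left_mem_uIcc

theorem minmod_mem_uIcc_right (a b : ℝ) : minmod a b ∈ uIcc 0 b :=
  minmod_comm a b ▸ minmod_mem_uIcc_left b a

theorem minmod_div_mul_mem_uIcc_left (a b : ℝ) {c : ℝ} (hc : c ≠ 0) :
    minmod (a / c) (b / c) * c ∈ uIcc 0 a := by
  simpa only [zero_mul, div_mul_cancel₀ a hc] using
    mul_const_mem_uIcc (minmod_mem_uIcc_left (a / c) (b / c)) c

theorem minmod_div_mul_mem_uIcc_right (a b : ℝ) {c : ℝ} (hc : c ≠ 0) :
    minmod (a / c) (b / c) * c ∈ uIcc 0 b := by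
  simpa only [minmod_comm] using minmod_div_mul_mem_uIcc_left b a hc

theorem minmod_reconstruction_TVD_general (Δx : ℝ) (hΔx : 0 < Δx) (N : ℕ)
    (U : ℕ → ℝ) (σ : ℕ → ℝ)
    (hσ0 : σ 0 = 0) (hσN : σ (N - 1) = 0)
    (hσ : ∀ i, 0 < i → i < N - 1 →
      σ i = minmod ((U i - U (i - 1)) / Δx) ((U (i + 1) - U i) / Δx)) :
    (∑ i ∈ Finset.range N, |σ i| * Δx)
      + (∑ i ∈ Finset.range (N - 1),
          |(U (i + 1) - σ (i + 1) * Δx / 2) - (U i + σ i * Δx / 2)|)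
    ≤ ∑ i ∈ Finset.range (N - 1), |U (i + 1) - U i| := by
  have hleft : ∀ i < N - 1, σ i * Δx ∈ uIcc 0 (U (i + 1) - U i) := by
    rintro (_ | i) hi
    · rw [hσ0, zero_mul]
      exact left_mem_uIcc
    · rw [hσ (i + 1) i.succ_pos hi]
      exact minmod_div_mul_mem_uIcc_right _ _ hΔx.ne'
  have hright : ∀ i < N - 1, σ (i + 1) * Δx ∈ uIcc 0 (U (i + 1) - U i) := by
    intro i hi
    rcases (show i + 1 ≤ N - 1 from hi).eq_or_lt with hlast | hi'
    · rw [hlast, hσN, zero_mul]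
      exact left_mem_uIcc
    · rw [hσ (i + 1) i.succ_pos hi', Nat.add_sub_cancel]
      exact minmod_div_mul_mem_uIcc_left _ _ hΔx.ne'
  have hcell : ∀ i, |σ i| * Δx = |σ i * Δx| := fun i => by rw [abs_mul, abs_of_pos hΔx]
  calc (∑ i ∈ range N, |σ i| * Δx)
        + ∑ i ∈ range (N - 1), |(U (i + 1) - σ (i + 1) * Δx / 2) - (U i + σ i * Δx / 2)|
      = ∑ i ∈ range (N - 1), (|σ i * Δx| / 2 + |σ (i + 1) * Δx| / 2
          + |(U (i + 1) - U i) - σ i * Δx / 2 - σ (i + 1) * Δx / 2|) := by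
        rw [sum_congr rfl fun i _ => hcell i,
          sum_range_eq_sum_range_pred_halves _ N (by simp [hσ0]) (by simp [hσN]),
          ← sum_add_distrib]
        congr! 3
        ring
    _ ≤ ∑ i ∈ range (N - 1), |U (i + 1) - U i| := sum_le_sum fun i hi =>
        (abs_half_add_abs_half_add_abs_sub_eq (hleft i (mem_range.1 hi))
          (hright i (mem_range.1 hi))).le

/-- The total variation of the minmod-limited piecewise linear reconstruction
(sum of in-cell variations `|σ_i| Δx` plus interface jumps) does not exceed
the total variation of the cell averages. -/
theorem minmod_reconstruction_TVD (Δx : ℝ) (hΔx : 0 < Δx) (N : ℕ) (hN : 2 ≤ N)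
    (U : ℕ → ℝ) (σ : ℕ → ℝ)
    (hσ0 : σ 0 = 0) (hσN : σ (N - 1) = 0)
    (hσ : ∀ i, 0 < i → i < N - 1 →
      σ i = minmod ((U i - U (i - 1)) / Δx) ((U (i + 1) - U i) / Δx)) :
    (∑ i ∈ Finset.range N, |σ i| * Δx)
      + (∑ i ∈ Finset.range (N - 1),
          |(U (i + 1) - σ (i + 1) * Δx / 2) - (U i + σ i * Δx / 2)|)
    ≤ ∑ i ∈ Finset.range (N - 1), |U (i + 1) - U i| :=
  minmod_reconstruction_TVD_general Δx hΔx N U σ hσ0 hσN hσ
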